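/- Let σ > 0, α > δ > 0, U_0, U_1 i.i.d. Uniform(0,1), T*_0 = σ U_0^(-1/α), and T*_1 = σ min{(T*_0/σ)^(α/(α-δ)), U_1^(-1/δ)}. Then P(T*_1 < T*_0) = δ/(α+δ). -/

import Mathlib

/-!
Almost surely `0 < U₀, U₁ < 1`. There the first term of the minimum is
`σ U₀^(-1/(α-δ)) ≥ σ U₀^(-1/α) = T₀`, so `T₁ < T₀` exactly when `U₁^(-1/δ) < U₀^(-1/α)`,
that is, when `U₀^(δ/α) < U₁`. By independence, `P(U₀^c < U₁) = ∫₀¹ (1 - x^c) dx = c/(c+1)`,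
and `c = δ/α` gives `δ/(α+δ)`.
-/

open MeasureTheory ProbabilityTheory Real Set

namespace MeasureTheory.pdf.IsUniform

variable {Ω E : Type*} [MeasurableSpace Ω] [MeasurableSpace E] {P : Measure Ω} {μ : Measure E}
  {X : Ω → E} {s : Set E}

theorem ae_mem (hs : MeasurableSet s) (hns : μ s ≠ 0) (hnt : μ s ≠ ⊤)
    (hu : IsUniform X s P μ) : ∀ᵐ ω ∂P, X ω ∈ s :=
  ae_of_ae_map (hu.aemeasurable hns hnt) (hu ▸ ae_cond_mem hs)

theorem map_eq_restrict (hs : μ s = 1) (hu : IsUniform X s P μ) : P.map X = μ.restrict s := by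
  rw [hu, ProbabilityTheory.cond, hs, inv_one, one_smul]

end MeasureTheory.pdf.IsUniform

theorem ProbabilityTheory.IndepFun.measure_lt_eq_lintegral {Ω : Type*} [MeasurableSpace Ω]
    {P : Measure Ω} [IsFiniteMeasure P] {X Y : Ω → ℝ} (hX : AEMeasurable X P)
    (hY : AEMeasurable Y P) (hXY : IndepFun X Y P) {g : ℝ → ℝ} (hg : Measurable g) :
    P {ω | g (X ω) < Y ω} = ∫⁻ x, P.map Y (Ioi (g x)) ∂P.map X := by
  have hS : MeasurableSet {p : ℝ × ℝ | g p.1 < p.2} :=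
    measurableSet_lt (hg.comp measurable_fst) measurable_snd
  calc P {ω | g (X ω) < Y ω} = (P.map X).prod (P.map Y) {p | g p.1 < p.2} := by
        rw [← hXY.map_prod_eq_prod_map_map hX hY,
          Measure.map_apply_of_aemeasurable (hX.prodMk hY) hS]
        rfl
    _ = ∫⁻ x, P.map Y (Ioi (g x)) ∂P.map X := Measure.prod_apply hS

theorem volume_restrict_Ioo_zero_one_Ioi {a : ℝ} (ha : 0 ≤ a) :
    volume.restrict (Ioo 0 1) (Ioi a) = ENNReal.ofReal (1 - a) := by
  have hinter : Ioi a ∩ Ioo 0 1 = Ioo a 1 :=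
    Set.ext fun y =>
      ⟨fun ⟨hay, _, hy1⟩ => ⟨hay, hy1⟩, fun ⟨hay, hy1⟩ => ⟨hay, ha.trans_lt hay, hy1⟩⟩
  rw [Measure.restrict_apply measurableSet_Ioi, hinter, volume_Ioo]

theorem lintegral_Ioo_zero_one_one_sub_rpow {c : ℝ} (hc : 0 ≤ c) :
    ∫⁻ x in Ioo 0 1, ENNReal.ofReal (1 - x ^ c) = ENNReal.ofReal (c / (c + 1)) := by
  have hrpow : IntervalIntegrable (fun x : ℝ => x ^ c) volume 0 1 :=
    intervalIntegral.intervalIntegrable_rpow (Or.inl (by linarith))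
  have hint : IntegrableOn (fun x : ℝ => 1 - x ^ c) (Ioc 0 1) :=
    (intervalIntegrable_iff_integrableOn_Ioc_of_le zero_le_one).mp
      (intervalIntegrable_const.sub hrpow)
  have hnonneg : 0 ≤ᵐ[volume.restrict (Ioo 0 1)] fun x : ℝ => 1 - x ^ c := by
    filter_upwards [ae_restrict_mem measurableSet_Ioo] with x hx
    exact sub_nonneg.mpr (rpow_le_one hx.1.le hx.2.le hc)
  rw [← ofReal_integral_eq_lintegral_ofReal (hint.mono_set Ioo_subset_Ioc_self) hnonneg,
    integral_Ioc_eq_integral_Ioo.symm, ← intervalIntegral.integral_of_le zero_le_one,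
    intervalIntegral.integral_sub intervalIntegrable_const hrpow,
    integral_rpow (Or.inl (by linarith)), intervalIntegral.integral_const]
  congr 1
  rw [one_rpow, zero_rpow (by linarith)]
  field_simp
  ring

theorem measure_rpow_lt_of_isUniform {Ω : Type*} [MeasurableSpace Ω] {P : Measure Ω}
    [IsFiniteMeasure P] {U₀ U₁ : Ω → ℝ} (hU₀ : pdf.IsUniform U₀ (Ioo 0 1) P)
    (hU₁ : pdf.IsUniform U₁ (Ioo 0 1) P) (hind : IndepFun U₀ U₁ P) {c : ℝ} (hc : 0 ≤ c) :
    P {ω | U₀ ω ^ c < U₁ ω} = ENNReal.ofReal (c / (c + 1)) := by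
  have hvol : volume (Ioo (0 : ℝ) 1) = 1 := by simp
  rw [hind.measure_lt_eq_lintegral (hU₀.aemeasurable (by simp) (by simp))
      (hU₁.aemeasurable (by simp) (by simp)) (g := fun x => x ^ c) (by fun_prop),
    hU₀.map_eq_restrict hvol, hU₁.map_eq_restrict hvol, ← lintegral_Ioo_zero_one_one_sub_rpow hc]
  exact setLIntegral_congr_fun measurableSet_Ioo fun x hx =>
    volume_restrict_Ioo_zero_one_Ioi (rpow_nonneg hx.1.le c)

theorem pareto_step_lt_iff {σ α δ u₀ u₁ : ℝ} (hσ : 0 < σ) (hδ : δ ∈ Ioo 0 α)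
    (hu₀ : u₀ ∈ Ioo 0 1) (hu₁ : 0 < u₁) :
    σ * min ((σ * u₀ ^ (-(1 / α)) / σ) ^ (α / (α - δ))) (u₁ ^ (-(1 / δ))) < σ * u₀ ^ (-(1 / α)) ↔
      u₀ ^ (δ / α) < u₁ := by
  obtain ⟨hδ0, hδα⟩ := hδ
  have hα : 0 < α := hδ0.trans hδα
  have hfirst : (u₀ ^ (-(1 / α))) ^ (α / (α - δ)) = u₀ ^ (-(1 / (α - δ))) := by
    rw [← rpow_mul hu₀.1.le]
    congr 1
    field_simp
  have hfirst_ge : u₀ ^ (-(1 / α)) ≤ u₀ ^ (-(1 / (α - δ))) :=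
    rpow_le_rpow_of_exponent_ge hu₀.1 hu₀.2.le <|
      neg_le_neg (one_div_le_one_div_of_le (sub_pos.mpr hδα) (by linarith))
  have hsecond : u₀ ^ (-(1 / α)) = (u₀ ^ (δ / α)) ^ (-(1 / δ)) := by
    rw [← rpow_mul hu₀.1.le]
    congr 1
    field_simp
  rw [mul_div_cancel_left₀ _ hσ.ne', mul_lt_mul_iff_right₀ hσ, hfirst, min_lt_iff,
    or_iff_right hfirst_ge.not_gt, hsecond,
    rpow_lt_rpow_iff_of_neg hu₁ (rpow_pos_of_pos hu₀.1 _) (by simpa using hδ0)]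

theorem stmt_19_general {Ω : Type*} [MeasureSpace Ω] [IsProbabilityMeasure (ℙ : Measure Ω)]
    (U₀ U₁ : Ω → ℝ)
    (hU₀ : pdf.IsUniform U₀ (Set.Ioo (0:ℝ) 1) ℙ)
    (hU₁ : pdf.IsUniform U₁ (Set.Ioo (0:ℝ) 1) ℙ)
    (hind : IndepFun U₀ U₁ ℙ)
    (σ α δ : ℝ) (hσ : 0 < σ) (hδ : δ ∈ Set.Ioo 0 α)
    (T₀ T₁ : Ω → ℝ)
    (hT₀ : T₀ = fun ω => σ * U₀ ω ^ (-(1 / α)))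
    (hT₁ : T₁ = fun ω =>
      σ * min ((T₀ ω / σ) ^ (α / (α - δ))) (U₁ ω ^ (-(1 / δ)))) :
    ℙ {ω | T₁ ω < T₀ ω} = ENNReal.ofReal (δ / (α + δ)) := by
  have hα : 0 < α := hδ.1.trans hδ.2
  calc ℙ {ω | T₁ ω < T₀ ω} = ℙ {ω | U₀ ω ^ (δ / α) < U₁ ω} := by
        refine measure_congr (Filter.eventuallyEq_set.mpr ?_)
        filter_upwards [hU₀.ae_mem measurableSet_Ioo (by simp) (by simp),
          hU₁.ae_mem measurableSet_Ioo (by simp) (by simp)] with ω hω₀ hω₁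
        subst hT₀ hT₁
        exact pareto_step_lt_iff hσ hδ hω₀ hω₁.1
    _ = ENNReal.ofReal (δ / α / (δ / α + 1)) :=
        measure_rpow_lt_of_isUniform hU₀ hU₁ hind (div_pos hδ.1 hα).le
    _ = ENNReal.ofReal (δ / (α + δ)) := by
        congr 1
        field_simp
        ring

theorem stmt_19 {Ω : Type*} [MeasureSpace Ω] [IsProbabilityMeasure (ℙ : Measure Ω)]
    (U₀ U₁ : Ω → ℝ) (hU₀m : Measurable U₀) (hU₁m : Measurable U₁)
    (hU₀ : pdf.IsUniform U₀ (Set.Ioo (0:ℝ) 1) ℙ)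
    (hU₁ : pdf.IsUniform U₁ (Set.Ioo (0:ℝ) 1) ℙ)
    (hind : IndepFun U₀ U₁ ℙ)
    (σ α δ : ℝ) (hσ : 0 < σ) (hα : 0 < α) (hδ : δ ∈ Set.Ioo 0 α)
    (T₀ T₁ : Ω → ℝ)
    (hT₀ : T₀ = fun ω => σ * U₀ ω ^ (-(1 / α)))
    (hT₁ : T₁ = fun ω =>
      σ * min ((T₀ ω / σ) ^ (α / (α - δ))) (U₁ ω ^ (-(1 / δ)))) :
    ℙ {ω | T₁ ω < T₀ ω} = ENNReal.ofReal (δ / (α + δ)) :=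
  stmt_19_general U₀ U₁ hU₀ hU₁ hind σ α δ hσ hδ T₀ T₁ hT₀ hT₁
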